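/- arXiv:2303.08625 — 2 statements merged into one kernel-verified Lean document; each statement's English description precedes it below -/
import Mathlib

section
/- Consider the characteristic function Ψ on subsets S of {1,…,d} defined by Ψ(S) = (∏_{j ∈ S} 𝟙[x⁽ʲ⁾ ∈ r⁽ʲ⁾])·(v_in − v_out) + v_out. Then the Shapley values of this game satisfy: φ_i = 0 whenever x⁽ⁱ⁾ ∈ r⁽ⁱ⁾, and φ_i = (v_out − v_in)/u whenever x⁽ⁱ⁾ ∉ r⁽ⁱ⁾, where u = #{j : x⁽ʲ⁾ ∉ r⁽ʲ⁾}, provided u ≥ 1. -/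
noncomputable def shapley (d : ℕ) (Ψ : Finset (Fin d) → ℝ) (i : Fin d) : ℝ :=
  ∑ S ∈ (Finset.univ.erase i).powerset,
    ((S.card.factorial * (d - S.card - 1).factorial : ℝ) / (d.factorial : ℝ)) *
      (Ψ (insert i S) - Ψ S)

lemma key_nat (k a v : ℕ) :
    (k+a).choose (k+1) * (k+1).factorial * (a+v).factorial
      + (v+1) * ((k+a).choose k * k.factorial * (a+v).factorial)
    = (k+a).choose k * k.factorial * (a+v+1).factorial := by
  have h : (k+a).choose (k+1) * (k+1) = (k+a).choose k * a := by
    rw [Nat.choose_succ_right_eq]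
    congr 1
    omega
  rw [Nat.factorial_succ k, Nat.factorial_succ (a+v)]
  zify at h ⊢
  linear_combination ((k.factorial : ℤ) * (a+v).factorial) * h

lemma sum_w (m u : ℕ) (hu : 1 ≤ u) :
    ∑ k ∈ Finset.range (m+1),
      ((k.factorial * (m + u - k - 1).factorial : ℝ) / ((m+u).factorial : ℝ)) * (m.choose k : ℝ)
    = 1 / u := by
  have hu0 : (u : ℝ) ≠ 0 := by positivity
  have hf : ((m+u).factorial : ℝ) ≠ 0 := by positivity
  set h : ℕ → ℝ := fun k =>
    -((m.choose k * k.factorial * (m + u - k).factorial : ℕ) : ℝ) / (u * (m+u).factorial) with hh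
  have step : ∀ k ∈ Finset.range (m+1),
      ((k.factorial * (m + u - k - 1).factorial : ℝ) / ((m+u).factorial : ℝ)) * (m.choose k : ℝ)
      = h (k+1) - h k := by
    intro k hk
    rw [Finset.mem_range] at hk
    obtain ⟨a, ha⟩ : ∃ a, m = k + a := ⟨m - k, by omega⟩
    obtain ⟨v, hv⟩ : ∃ v, u = v + 1 := ⟨u - 1, by omega⟩
    subst ha hv
    have e1 : k + a + (v+1) - k - 1 = a + v := by omega
    have e2 : k + a + (v+1) - (k+1) = a + v := by omega
    have e3 : k + a + (v+1) - k = a + v + 1 := by omega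
    have hid := key_nat k a v
    have hid' : (((k+a).choose (k+1) : ℝ) * (k+1).factorial * (a+v).factorial
        + ((v:ℝ)+1) * ((k+a).choose k * k.factorial * (a+v).factorial))
        = ((k+a).choose k : ℝ) * k.factorial * (a+v+1).factorial := by
      exact_mod_cast congrArg (Nat.cast : ℕ → ℝ) hid
    have hv0 : ((v:ℝ)+1) ≠ 0 := by positivity
    have hD : ((v:ℝ)+1) * ((k+a+(v+1)).factorial : ℝ) ≠ 0 := by positivity
    have e : h (k+1) - h k =
        ((((k+a).choose k : ℝ) * k.factorial * (a+v+1).factorial)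
          - (((k+a).choose (k+1) : ℝ) * (k+1).factorial * (a+v).factorial))
          / (((v:ℝ)+1) * ((k+a+(v+1)).factorial : ℝ)) := by
      rw [hh]
      simp only [e2, e3]
      push_cast
      ring
    rw [e, e1, div_mul_eq_mul_div, div_eq_div_iff hf hD]
    push_cast
    linear_combination (((k+a+(v+1)).factorial : ℝ)) * hid'
  rw [Finset.sum_congr rfl step, Finset.sum_range_sub h]
  rw [hh]
  simp only [Nat.choose_self, Nat.choose_succ_self, Nat.zero_eq, Nat.choose_zero_right]
  simp [Nat.sub_zero]
  field_simp

theorem hrbm_shapley (d : ℕ) (hd : 0 < d) (b : Fin d → ℝ)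
    (hb : ∀ j, b j = 0 ∨ b j = 1) (vin vout : ℝ)
    (Ψ : Finset (Fin d) → ℝ)
    (hΨ : ∀ S, Ψ S = (∏ j ∈ S, b j) * (vin - vout) + vout)
    (u : ℕ) (hu : u = (Finset.univ.filter (fun j => b j = 0)).card)
    (i : Fin d) :
    (b i = 1 → shapley d Ψ i = 0) ∧
    (b i = 0 → 1 ≤ u → shapley d Ψ i = (vout - vin) / u) := by
  classical
  constructor
  · intro hbi
    unfold shapley
    apply Finset.sum_eq_zero
    intro S hS
    have hiS : i ∉ S := fun hi =>
      (Finset.notMem_erase i Finset.univ) ((Finset.mem_powerset.1 hS) hi)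
    rw [hΨ, hΨ, Finset.prod_insert hiS, hbi, one_mul]
    ring
  · intro hbi hu1
    set A : Finset (Fin d) := Finset.univ.filter (fun j => b j = 1) with hA
    have hcard : A.card + u = d := by
      rw [hu, hA]
      have : ∀ j : Fin d, b j = 1 ↔ ¬ (b j = 0) := by
        intro j
        rcases hb j with h | h <;> simp [h]
      rw [Finset.filter_congr (fun j _ => this j), add_comm,
        Finset.card_filter_add_card_filter_not (fun j => b j = 0)]
      simp
    have hAsub : A ⊆ Finset.univ.erase i := by
      intro j hj
      rw [Finset.mem_erase]
      refine ⟨?_, Finset.mem_univ j⟩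
      rintro rfl
      rw [hA, Finset.mem_filter] at hj
      rw [hbi] at hj
      norm_num at hj
    unfold shapley
    rw [← Finset.sum_subset (Finset.powerset_mono.2 hAsub)]
    · have hterm : ∀ S ∈ A.powerset,
          ((S.card.factorial * (d - S.card - 1).factorial : ℝ) / (d.factorial : ℝ)) *
            (Ψ (insert i S) - Ψ S)
          = ((S.card.factorial * (d - S.card - 1).factorial : ℝ) / (d.factorial : ℝ)) *
            (vout - vin) := by
        intro S hS
        rw [Finset.mem_powerset] at hS
        have hiS : i ∉ S := fun hi => by
          have := hS hi
          rw [hA, Finset.mem_filter] at this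
          rw [hbi] at this
          norm_num at this
        have hprod : ∏ j ∈ S, b j = 1 := by
          apply Finset.prod_eq_one
          intro j hj
          have := hS hj
          rw [hA, Finset.mem_filter] at this
          exact this.2
        rw [hΨ, hΨ, Finset.prod_insert hiS, hbi, hprod]
        ring
      rw [Finset.sum_congr rfl hterm]
      have := Finset.sum_powerset_apply_card
        (fun n => ((n.factorial * (d - n - 1).factorial : ℝ) / (d.factorial : ℝ)) * (vout - vin))
        (x := A)
      rw [this]
      have hsum : ∑ k ∈ Finset.range (A.card + 1),
          (A.card.choose k) • (((k.factorial * (d - k - 1).factorial : ℝ) / (d.factorial : ℝ)) * (vout - vin))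
          = (∑ k ∈ Finset.range (A.card + 1),
              ((k.factorial * (A.card + u - k - 1).factorial : ℝ) / ((A.card + u).factorial : ℝ)) * (A.card.choose k : ℝ)) * (vout - vin) := by
        rw [Finset.sum_mul]
        apply Finset.sum_congr rfl
        intro k _
        rw [nsmul_eq_mul, hcard]
        ring
      rw [hsum, sum_w A.card u hu1]
      field_simp
    · intro S hS hSA
      rw [Finset.mem_powerset] at hS hSA
      obtain ⟨j, hjS, hjA⟩ : ∃ j ∈ S, j ∉ A := by
        by_contra h
        push_neg at h
        exact hSA h
      have hbj : b j = 0 := by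
        rcases hb j with h | h
        · exact h
        · exact absurd (by rw [hA, Finset.mem_filter]; exact ⟨Finset.mem_univ j, h⟩) hjA
      have h1 : ∏ l ∈ S, b l = 0 := Finset.prod_eq_zero hjS hbj
      have h2 : ∏ l ∈ insert i S, b l = 0 :=
        Finset.prod_eq_zero (Finset.mem_insert_of_mem hjS) hbj
      rw [hΨ, hΨ, h1, h2]
      ring
end

section
/- In the data-based SHAP for HRBM under feature independence, for any S ⊆ {1,…,d} and i ∉ S, the marginal contribution satisfies Ψ̃(S∪{i}) − Ψ̃(S) = ((v_in − v_out)/N)·𝟙[x⁽ˢ⁾ ∈ r⁽ˢ⁾]·Σ_{t=1}^N 𝟙[x_t^{(S̄∖{i})} ∈ r^{(S̄∖{i})}]·𝟙[x_t⁽ⁱ⁾ ∉ r⁽ⁱ⁾], where Ψ̃(S) = v_out + (v_in − v_out)·𝟙[x⁽ˢ⁾ ∈ r⁽ˢ⁾]·(1/N)·Σ_{t=1}^N 𝟙[x_t^{(S̄)} ∈ r^{(S̄)}] and S̄ = {1,…,d}∖S. -/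
/-- Indicator that the coordinates of `z` with indices in `U` lie in the
hyper-rectangle with bounds `a`, `b`. -/
noncomputable def rectInd {d : ℕ} (a b z : Fin d → ℝ) (U : Finset (Fin d)) : ℝ :=
  ∏ j ∈ U, (if a j ≤ z j ∧ z j ≤ b j then (1 : ℝ) else 0)

lemma rectInd_insert {d : ℕ} (a b z : Fin d → ℝ) (U : Finset (Fin d)) (i : Fin d)
    (hi : i ∉ U) : rectInd a b z (insert i U) =
    (if a i ≤ z i ∧ z i ≤ b i then (1 : ℝ) else 0) * rectInd a b z U := by
  simp [rectInd, Finset.prod_insert hi]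

theorem data_based_shap_marginal (d N : ℕ) (hd : 0 < d) (hN : 0 < N)
    (a b x : Fin d → ℝ) (xt : Fin N → Fin d → ℝ) (vin vout : ℝ)
    (Ψ : Finset (Fin d) → ℝ)
    (hΨ : ∀ S, Ψ S = vout + (vin - vout) * rectInd a b x S *
        ((1 / N) * ∑ t, rectInd a b (xt t) Sᶜ))
    (S : Finset (Fin d)) (i : Fin d) (hiS : i ∉ S)
    (hxi : a i ≤ x i ∧ x i ≤ b i) :
    Ψ (insert i S) - Ψ S = ((vin - vout) / N) * rectInd a b x S *
      ∑ t, rectInd a b (xt t) (Sᶜ \ {i}) *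
        (if a i ≤ xt t i ∧ xt t i ≤ b i then (0 : ℝ) else 1) := by
  have hiSc : i ∈ Sᶜ := Finset.mem_compl.mpr hiS
  have hcompl : (insert i S)ᶜ = Sᶜ \ {i} := by
    ext j; simp [Finset.mem_compl, Finset.mem_insert, and_comm, or_comm]
  have hx : rectInd a b x (insert i S) = rectInd a b x S := by
    rw [rectInd_insert a b x S i hiS, if_pos hxi, one_mul]
  have hins : i ∉ Sᶜ \ {i} := by simp
  have hSc : ∀ t, rectInd a b (xt t) Sᶜ =
      (if a i ≤ xt t i ∧ xt t i ≤ b i then (1 : ℝ) else 0) * rectInd a b (xt t) (Sᶜ \ {i}) := by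
    intro t
    rw [← rectInd_insert a b (xt t) (Sᶜ \ {i}) i hins, Finset.sdiff_singleton_eq_erase,
      Finset.insert_erase hiSc]
  rw [hΨ, hΨ, hcompl, hx]
  rw [Finset.sum_congr rfl (fun t _ => hSc t)]
  have : ∀ t : Fin N,
      rectInd a b (xt t) (Sᶜ \ {i}) -
        (if a i ≤ xt t i ∧ xt t i ≤ b i then (1 : ℝ) else 0) * rectInd a b (xt t) (Sᶜ \ {i}) =
      rectInd a b (xt t) (Sᶜ \ {i}) *
        (if a i ≤ xt t i ∧ xt t i ≤ b i then (0 : ℝ) else 1) := by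
    intro t; by_cases h : a i ≤ xt t i ∧ xt t i ≤ b i <;> simp [h]
  have key : (∑ t, rectInd a b (xt t) (Sᶜ \ {i})) -
      (∑ t, (if a i ≤ xt t i ∧ xt t i ≤ b i then (1 : ℝ) else 0) * rectInd a b (xt t) (Sᶜ \ {i})) =
      ∑ t, rectInd a b (xt t) (Sᶜ \ {i}) *
        (if a i ≤ xt t i ∧ xt t i ≤ b i then (0 : ℝ) else 1) := by
    rw [← Finset.sum_sub_distrib]
    exact Finset.sum_congr rfl (fun t _ => this t)
  linear_combination ((vin - vout) * rectInd a b x S / N) * key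
end
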